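/- arXiv:1908.04843 — 4 statements merged into one kernel-verified Lean document; each statement's English description precedes it below -/
import Mathlib

section
/- Let S₀, S₁, S₂, … be subsets of ℤ with 0 ∈ S₀ and S_k ≠ ∅ for at least one k ≥ 2. Then gcd of the union of all S_k (k ≥ 0) equals gcd of the set S₁ ∪ ⋃_{k≥2} (S_k + S₀), where S_k + S₀ = {s + r : s ∈ S_k, r ∈ S₀}. -/
/-! As `0 ∈ S₀`, each `S_k` lies in `S_k + S₀`, so a common divisor `d` of the right-hand side
divides every `S_k` with `k ≥ 2`. Picking `s` in a nonempty one, `d ∣ s` and `d ∣ s + r` give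
`d ∣ r` for every `r ∈ S₀`. -/

open scoped Pointwise

section

variable {α : Type*} [NonUnitalRing α] {d : α} {s t : Set α}

theorem Set.forall_dvd_add_of_forall_dvd (hs : ∀ a ∈ s, d ∣ a) (ht : ∀ b ∈ t, d ∣ b) :
    ∀ n ∈ s + t, d ∣ n := by
  rintro _ ⟨a, ha, b, hb, rfl⟩
  exact dvd_add (hs a ha) (ht b hb)

theorem Set.forall_dvd_left_of_forall_dvd_add (h0 : (0 : α) ∈ t) (h : ∀ n ∈ s + t, d ∣ n) :
    ∀ a ∈ s, d ∣ a := fun a ha => by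
  simpa using h (a + 0) (Set.add_mem_add ha h0)

theorem Set.forall_dvd_right_of_forall_dvd_add (hs : s.Nonempty) (h0 : (0 : α) ∈ t)
    (h : ∀ n ∈ s + t, d ∣ n) : ∀ b ∈ t, d ∣ b := by
  obtain ⟨a, ha⟩ := hs
  have hda : d ∣ a := Set.forall_dvd_left_of_forall_dvd_add h0 h a ha
  exact fun b hb => (dvd_add_right hda).1 (h (a + b) (Set.add_mem_add ha hb))

end

/-- gcd (⋃ k, S k) = gcd (S 1 ∪ ⋃_{k ≥ 2} (S k + S 0)), stated via the
universal property of gcd (common divisors coincide), given 0 ∈ S 0 and some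
S k ≠ ∅ with k ≥ 2. -/
theorem stmt5 (S : ℕ → Set ℤ) (h0 : (0 : ℤ) ∈ S 0)
    (hk : ∃ k, 2 ≤ k ∧ (S k).Nonempty) :
    ∀ d : ℤ, (∀ n ∈ ⋃ k, S k, d ∣ n) ↔
      (∀ n ∈ S 1 ∪ ⋃ k, ⋃ (_ : 2 ≤ k), Set.image2 (· + ·) (S k) (S 0), d ∣ n) := by
  intro d
  simp only [Set.image2_add, Set.mem_union, Set.mem_iUnion, or_imp, forall_and,
    forall_exists_index]
  constructor
  · intro h
    have hS : ∀ k, ∀ n ∈ S k, d ∣ n := fun k n hn => h n k hn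
    exact ⟨hS 1, fun n k _ hn => Set.forall_dvd_add_of_forall_dvd (hS k) (hS 0) n hn⟩
  · rintro ⟨hS1, hsum⟩ n k hn
    have hsum' : ∀ k, 2 ≤ k → ∀ n ∈ S k + S 0, d ∣ n := fun k hk n hn => hsum n k hk hn
    obtain ⟨k₀, hk₀, hne⟩ := hk
    obtain _ | _ | k := k
    · exact Set.forall_dvd_right_of_forall_dvd_add hne h0 (hsum' k₀ hk₀) n hn
    · exact hS1 n hn
    · exact Set.forall_dvd_left_of_forall_dvd_add h0 (hsum' (k + 2) (by omega)) n hn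
end

section
/- (Cycle lemma / Otter–Dwass identity for sesqui-type trees) Let (ξ_i, ζ_i), i ≥ 1 be i.i.d. copies of an ℕ₀²-valued random vector (ξ, ζ). Let T be the sesqui-type Galton–Watson tree in which only type-1 vertices reproduce, each with offspring (ξ, ζ) (ξ children of type 1, ζ sterile children of type 2), started from a type-1 root. Then for all n ≥ ℓ ≥ 1, P(#T = n, #₁T = ℓ) = (1/ℓ)·P( Σ_{i=1}^ℓ (ξ_i − 1) = −1 and Σ_{i=1}^ℓ (ζ_i + 1) = n ). -/
/-!
Extend a word `a : Fin ℓ → ℕ` with `∑ a = ℓ - 1` periodically and let `S` be the walk with steps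
`a i - 1`; then `S (k + ℓ) = S k - 1`. The rotation of `a` starting at `r` is a first-passage word
exactly when `S r ≤ S (r + k)` for `0 < k < ℓ`, and because of the drift `-1` per period this
happens for exactly one `r`, the first minimum of `S` on `[0, ℓ)` (cycle lemma). Hence rotation is
a bijection from (first-passage words) × `Fin ℓ` onto all words with the prescribed sums, and since
the weight `∏ p (w i)` is rotation invariant, the weighted sum over all words is `ℓ` times the one
over first-passage words.
-/

open Finset Fin.NatCast

theorem Fin.sum_univ_ite_val_lt {M : Type*} [AddCommMonoid M] {n k : ℕ} (f : ℕ → M)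
    (hk : k ≤ n) : ∑ i : Fin n, (if (i : ℕ) < k then f i else 0) = ∑ j ∈ range k, f j := by
  rw [Fin.sum_univ_eq_sum_range (fun j => if j < k then f j else 0), ← sum_filter]
  congr 1
  ext j
  simp only [mem_filter, mem_range]
  omega

namespace CycleLemma

theorem existsUnique_forall_le_add_of_add_period {ℓ : ℕ} (hℓ : 0 < ℓ) {S : ℕ → ℤ}
    (hS : ∀ k, S (k + ℓ) = S k - 1) :
    ∃! r : Fin ℓ, ∀ k, 1 ≤ k → k < ℓ → S r ≤ S (r + k) := by
  -- two good starting points `t < t'` would give `S t ≤ S t' ≤ S (t + ℓ) = S t - 1`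
  have not_lt : ∀ t t' : ℕ, (∀ k, 1 ≤ k → k < ℓ → S t ≤ S (t + k)) →
      (∀ k, 1 ≤ k → k < ℓ → S t' ≤ S (t' + k)) → t' < ℓ → ¬ t < t' := by
    intro t t' ht ht' ht'ℓ htt'
    have h₁ := ht (t' - t) (by omega) (by omega)
    have h₂ := ht' (t + ℓ - t') (by omega) (by omega)
    rw [Nat.add_sub_cancel' htt'.le] at h₁
    rw [Nat.add_sub_cancel' (by omega), hS] at h₂
    omega
  have hmin : ∃ j, j < ℓ ∧ ∀ i < ℓ, S j ≤ S i := by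
    obtain ⟨j, hj, hmin⟩ := exists_min_image (range ℓ) S ⟨0, mem_range.2 hℓ⟩
    exact ⟨j, mem_range.1 hj, fun i hi => hmin i (mem_range.2 hi)⟩
  set r := Nat.find hmin
  obtain ⟨hrℓ, hr⟩ : r < ℓ ∧ ∀ i < ℓ, S r ≤ S i := Nat.find_spec hmin
  have hr_lt : ∀ j < r, S r < S j := by
    intro j hj
    have := Nat.find_min hmin hj
    push Not at this
    obtain ⟨i, hi, hlt⟩ := this (hj.trans hrℓ)
    exact (hr i hi).trans_lt hlt
  have hgood : ∀ k, 1 ≤ k → k < ℓ → S r ≤ S (r + k) := by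
    intro k hk1 hk2
    by_cases h : r + k < ℓ
    · exact hr _ h
    · have := hS (r + k - ℓ)
      rw [Nat.sub_add_cancel (by omega)] at this
      have := hr_lt (r + k - ℓ) (by omega)
      omega
  refine ⟨⟨r, hrℓ⟩, hgood, fun s hs => Fin.ext ?_⟩
  have hsr := not_lt s r hs hgood hrℓ
  have hrs := not_lt r s hgood hs s.isLt
  show (s : ℕ) = r
  omega

/-- The walk `∑_{i<k} (a i - 1)` does not hit `-1` before time `ℓ`. -/
def IsFirstPassage {ℓ : ℕ} (a : Fin ℓ → ℕ) : Prop :=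
  ∀ k, 1 ≤ k → k < ℓ → k ≤ ∑ i : Fin ℓ, if (i : ℕ) < k then a i else 0

section Walk

variable {ℓ : ℕ} [NeZero ℓ]

/-- Indices are read modulo `ℓ` through the cast `ℕ → Fin ℓ`, so this is the periodic walk. -/
def walk (a : Fin ℓ → ℕ) (k : ℕ) : ℤ :=
  ∑ i ∈ range k, ((a i : ℤ) - 1)

theorem walk_add (a : Fin ℓ → ℕ) (m k : ℕ) :
    walk a (m + k) = walk a m + ∑ i ∈ range k, ((a (m + i : ℕ) : ℤ) - 1) :=
  sum_range_add _ _ _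

theorem walk_period (a : Fin ℓ → ℕ) (ha : ∑ i, a i = ℓ - 1) : walk a ℓ = -1 := by
  rw [walk, ← Fin.sum_univ_eq_sum_range (fun i => (a i : ℤ) - 1)]
  simp only [Fin.cast_val_eq_self, sum_sub_distrib, sum_const, card_univ, Fintype.card_fin,
    nsmul_one]
  have hℓ := NeZero.one_le (n := ℓ)
  have hcast : ((∑ i, a i : ℕ) : ℤ) = ∑ i, (a i : ℤ) := Nat.cast_sum _ _
  omega

theorem walk_add_period (a : Fin ℓ → ℕ) (ha : ∑ i, a i = ℓ - 1) (k : ℕ) :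
    walk a (k + ℓ) = walk a k - 1 := by
  simp only [add_comm k, walk_add, walk_period a ha, Nat.cast_add, Fin.natCast_self, zero_add]
  rw [walk]
  ring

theorem sum_prefix_rotate (a : Fin ℓ → ℕ) (r : Fin ℓ) {k : ℕ} (hk : k ≤ ℓ) :
    ((∑ i : Fin ℓ, if (i : ℕ) < k then a (i + r) else 0 : ℕ) : ℤ) =
      walk a (r + k) - walk a r + k := by
  have hrot : ∀ i : Fin ℓ, a (i + r) = a ((r + i : ℕ) : Fin ℓ) := fun i => by
    rw [Nat.cast_add, Fin.cast_val_eq_self, Fin.cast_val_eq_self, add_comm]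
  simp only [hrot, Fin.sum_univ_ite_val_lt (fun j => a ((r + j : ℕ) : Fin ℓ)) hk, walk_add,
    Nat.cast_sum, sum_sub_distrib, sum_const, card_range, nsmul_one]
  ring

theorem isFirstPassage_rotate_iff (a : Fin ℓ → ℕ) (r : Fin ℓ) :
    IsFirstPassage (fun i => a (i + r)) ↔ ∀ k, 1 ≤ k → k < ℓ → walk a r ≤ walk a (r + k) := by
  refine forall_congr' fun k => forall_congr' fun _ => forall_congr' fun hk => ?_
  beta_reduce
  have := sum_prefix_rotate a r hk.le
  omega

theorem existsUnique_isFirstPassage_rotate (a : Fin ℓ → ℕ) (ha : ∑ i, a i = ℓ - 1) :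
    ∃! r : Fin ℓ, IsFirstPassage (fun i => a (i + r)) := by
  simp only [isFirstPassage_rotate_iff]
  exact existsUnique_forall_le_add_of_add_period (NeZero.pos ℓ) (walk_add_period a ha)

end Walk

section Rotation

variable {ℓ : ℕ} [NeZero ℓ] {α : Type*} {P Q : (Fin ℓ → α) → Prop}

@[to_additive]
theorem prod_comp_add_right {M : Type*} [CommMonoid M] (f : Fin ℓ → M) (r : Fin ℓ) :
    ∏ i, f (i + r) = ∏ i, f i :=
  Equiv.prod_comp (Equiv.addRight r) f

theorem bijective_rotate (hQ : ∀ w r, Q w → Q (fun i => w (i + r)))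
    (hP : ∀ w, Q w → ∃! r, P (fun i => w (i + r))) :
    Function.Bijective (fun x : {w // P w ∧ Q w} × Fin ℓ =>
      (⟨fun i => x.1.1 (i + x.2), hQ _ _ x.1.2.2⟩ : {w // Q w})) := by
  constructor
  · rintro ⟨⟨w, hPw, hQw⟩, r⟩ ⟨⟨w', hPw', _⟩, r'⟩ hrot
    have hw' : w' = fun i => w (i + (r - r')) := funext fun i => by
      have := congrFun (congrArg Subtype.val hrot) (i - r')
      simp only [sub_add_cancel] at this
      rw [← this]
      abel_nf
    obtain ⟨s, -, hs⟩ := hP w hQw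
    have hr : r = r' := by
      have h₀ := hs 0 (by simpa using hPw)
      have h₁ := hs (r - r') (by simpa only [hw'] using hPw')
      exact sub_eq_zero.1 (h₁.trans h₀.symm)
    subst hr
    simp_all
  · rintro ⟨v, hQv⟩
    obtain ⟨s, hs, -⟩ := hP v hQv
    exact ⟨(⟨_, hs, hQ v s hQv⟩, -s), by simp⟩

theorem tsum_eq_smul_tsum_of_existsUnique_rotate {M : Type*} [AddCommMonoid M]
    [TopologicalSpace M] [Finite {w // Q w}] (hQ : ∀ w r, Q w → Q (fun i => w (i + r)))
    (hP : ∀ w, Q w → ∃! r, P (fun i => w (i + r))) (f : (Fin ℓ → α) → M)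
    (hf : ∀ w r, f (fun i => w (i + r)) = f w) :
    ∑' w : {w // Q w}, f w = ℓ • ∑' w : {w // P w ∧ Q w}, f w := by
  let e := Equiv.ofBijective _ (bijective_rotate hQ hP)
  have : Finite ({w // P w ∧ Q w} × Fin ℓ) := Finite.of_equiv _ e.symm
  have : Finite {w // P w ∧ Q w} := Finite.prod_left (Fin ℓ)
  have := Fintype.ofFinite {w // P w ∧ Q w}
  rw [← e.tsum_eq, tsum_fintype, tsum_fintype, Fintype.sum_prod_type, smul_sum]
  simp [e, hf]

end Rotation

theorem finite_sum_fst_eq_sum_snd_eq (ℓ A B : ℕ) :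
    Finite {w : Fin ℓ → ℕ × ℕ // ∑ i, (w i).1 = A ∧ ∑ i, (w i).2 = B} := by
  refine Finite.of_injective (β := Nat.antidiagonalTuple ℓ A × Nat.antidiagonalTuple ℓ B)
    (fun w => (⟨fun i => (w.1 i).1, Nat.mem_antidiagonalTuple.2 w.2.1⟩,
      ⟨fun i => (w.1 i).2, Nat.mem_antidiagonalTuple.2 w.2.2⟩)) fun v w h => ?_
  simp only [Prod.mk.injEq, Subtype.mk.injEq, funext_iff] at h
  exact Subtype.ext (funext fun i => Prod.ext (h.1 i) (h.2 i))

end CycleLemma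

open CycleLemma

theorem stmt8_general (p : ℕ × ℕ → ℝ)
    (n ℓ : ℕ) (h1 : 1 ≤ ℓ) :
    (∑' w : {w : Fin ℓ → ℕ × ℕ //
        (∀ k, 1 ≤ k → k < ℓ → k ≤ ∑ i : Fin ℓ, if (i : ℕ) < k then (w i).1 else 0) ∧
        (∑ i, (w i).1 = ℓ - 1) ∧ (∑ i, (w i).2 = n - ℓ)}, ∏ i, p (w.1 i))
      = (1 / ℓ : ℝ) *
        ∑' w : {w : Fin ℓ → ℕ × ℕ // (∑ i, (w i).1 = ℓ - 1) ∧ (∑ i, (w i).2 = n - ℓ)},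
          ∏ i, p (w.1 i) := by
  have : NeZero ℓ := ⟨by omega⟩
  have := finite_sum_fst_eq_sum_snd_eq ℓ (ℓ - 1) (n - ℓ)
  rw [tsum_eq_smul_tsum_of_existsUnique_rotate (P := fun w => IsFirstPassage fun i => (w i).1)
    (Q := fun w => ∑ i, (w i).1 = ℓ - 1 ∧ ∑ i, (w i).2 = n - ℓ) ?rotate ?cycle
    (fun w => ∏ i, p (w i)) ?weight, nsmul_eq_mul]
  · field_simp
    rfl
  case rotate =>
    intro w r hw
    simpa only [sum_comp_add_right fun i => (w i).1, sum_comp_add_right fun i => (w i).2] using hw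
  case cycle => exact fun w hw => existsUnique_isFirstPassage_rotate _ hw.1
  case weight => exact fun w r => prod_comp_add_right (fun i => p (w i)) r

/-- cycle lemma / Otter–Dwass for sesqui-type trees:
P(#T = n, #₁T = ℓ), written via the first-passage depth-first representation,
equals (1/ℓ)·P(Σ(ξᵢ−1) = −1, Σ(ζᵢ+1) = n). -/
theorem stmt8 (p : ℕ × ℕ → ℝ) (hpos : ∀ v, 0 ≤ p v) (hsum : HasSum p 1)
    (n ℓ : ℕ) (h1 : 1 ≤ ℓ) (hn : ℓ ≤ n) :
    (∑' w : {w : Fin ℓ → ℕ × ℕ //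
        (∀ k, 1 ≤ k → k < ℓ → k ≤ ∑ i : Fin ℓ, if (i : ℕ) < k then (w i).1 else 0) ∧
        (∑ i, (w i).1 = ℓ - 1) ∧ (∑ i, (w i).2 = n - ℓ)}, ∏ i, p (w.1 i))
      = (1 / ℓ : ℝ) *
        ∑' w : {w : Fin ℓ → ℕ × ℕ // (∑ i, (w i).1 = ℓ - 1) ∧ (∑ i, (w i).2 = n - ℓ)},
          ∏ i, p (w.1 i) :=
  stmt8_general p n ℓ h1
end

section
/- Let t > 0 and for x > 1 define y = sqrt(x−1)·sqrt(t+x−1)/sqrt(x) and λ = sqrt(x−1)·sqrt(x)·sqrt(t+x−1) / (2(t−2)x − t + 3x² + 1). With Z = t/(t + 2x − 2), the pair (x, y) then satisfies Z = sqrt(1 − 4λ²x/(1 − λy)²), f•(x,y) := t(1−Z)/(2xZ) = 1 − 1/x, and f⋄(x,y) := tλ/((1−λy)Z) = y. -/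
/-!
Write `u = x - 1`, `v = t + x - 1` and `s = t + 2x - 2 = u + v`. The denominator of `λ` is
`D = x s + u v` and `λ y = u v / D`, so `1 - λ y = x s / D`. Hence `4 λ² x / (1 - λ y)² = 4 u v / s²`,
and `1 - 4 u v / (u + v)² = ((v - u) / (u + v))² = (t / s)² = Z²` with `Z > 0`. Likewise
`λ / (1 - λ y) = y / s`, so `t λ / ((1 - λ y) Z) = y`, while `f•(x, y) = 1 - 1/x` only involves `Z`.
-/

namespace QuenchedWeights

noncomputable def yStar (t x : ℝ) : ℝ := √(x - 1) * √(t + x - 1) / √x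

noncomputable def lamStar (t x : ℝ) : ℝ :=
  √(x - 1) * √x * √(t + x - 1) / (2 * (t - 2) * x - t + 3 * x ^ 2 + 1)

variable {t x : ℝ}

theorem denom_eq (t x : ℝ) :
    2 * (t - 2) * x - t + 3 * x ^ 2 + 1 = x * (t + 2 * x - 2) + (x - 1) * (t + x - 1) := by
  ring

theorem denom_pos (ht : 0 < t) (hx : 1 < x) : 0 < 2 * (t - 2) * x - t + 3 * x ^ 2 + 1 := by
  rw [denom_eq]
  have : 0 < t + 2 * x - 2 := by linarith
  have : 0 < t + x - 1 := by linarith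
  have : 0 < x - 1 := by linarith
  positivity

theorem lamStar_mul_yStar (hx : 1 ≤ x) (htx : 0 ≤ t + x - 1) :
    lamStar t x * yStar t x = (x - 1) * (t + x - 1) / (2 * (t - 2) * x - t + 3 * x ^ 2 + 1) := by
  rw [lamStar, yStar]
  field_simp
  rw [Real.sq_sqrt (by linarith), Real.sq_sqrt htx]

theorem one_sub_lamStar_mul_yStar (ht : 0 < t) (hx : 1 < x) :
    1 - lamStar t x * yStar t x = x * (t + 2 * x - 2) / (2 * (t - 2) * x - t + 3 * x ^ 2 + 1) := by
  rw [lamStar_mul_yStar hx.le (by linarith), eq_div_iff (denom_pos ht hx).ne', sub_mul,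
    div_mul_cancel₀ _ (denom_pos ht hx).ne', denom_eq]
  ring

theorem lamStar_sq (hx : 1 ≤ x) (htx : 0 ≤ t + x - 1) :
    lamStar t x ^ 2 = (x - 1) * x * (t + x - 1) / (2 * (t - 2) * x - t + 3 * x ^ 2 + 1) ^ 2 := by
  rw [lamStar, div_pow, mul_pow, mul_pow, Real.sq_sqrt (by linarith), Real.sq_sqrt (by linarith),
    Real.sq_sqrt htx]

theorem four_lamStar_sq_mul_div (ht : 0 < t) (hx : 1 < x) :
    4 * lamStar t x ^ 2 * x / (1 - lamStar t x * yStar t x) ^ 2 =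
      4 * (x - 1) * (t + x - 1) / (t + 2 * x - 2) ^ 2 := by
  have hD := (denom_pos ht hx).ne'
  rw [one_sub_lamStar_mul_yStar ht hx, lamStar_sq hx.le (by linarith)]
  generalize 2 * (t - 2) * x - t + 3 * x ^ 2 + 1 = D at hD ⊢
  field_simp

theorem one_sub_four_mul_div_add_sq {u v : ℝ} (h : u + v ≠ 0) :
    1 - 4 * u * v / (u + v) ^ 2 = ((v - u) / (u + v)) ^ 2 := by
  field_simp
  ring

theorem one_sub_four_lamStar_sq_mul_div (ht : 0 < t) (hx : 1 < x) :
    1 - 4 * lamStar t x ^ 2 * x / (1 - lamStar t x * yStar t x) ^ 2 = (t / (t + 2 * x - 2)) ^ 2 := by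
  have hs : t + 2 * x - 2 = (x - 1) + (t + x - 1) := by ring
  rw [four_lamStar_sq_mul_div ht hx, hs, one_sub_four_mul_div_add_sq (by linarith)]
  ring_nf

theorem lamStar_div_one_sub_lamStar_mul_yStar (ht : 0 < t) (hx : 1 < x) :
    lamStar t x / (1 - lamStar t x * yStar t x) = yStar t x / (t + 2 * x - 2) := by
  have hD := (denom_pos ht hx).ne'
  rw [one_sub_lamStar_mul_yStar ht hx, lamStar, yStar]
  generalize 2 * (t - 2) * x - t + 3 * x ^ 2 + 1 = D at hD ⊢
  field_simp
  rw [Real.sq_sqrt (by linarith)]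
  ring

theorem t_mul_one_sub_div_eq (ht : t ≠ 0) (hx : x ≠ 0) (hs : t + 2 * x - 2 ≠ 0) :
    t * (1 - t / (t + 2 * x - 2)) / (2 * x * (t / (t + 2 * x - 2))) = 1 - 1 / x := by
  field_simp
  ring

end QuenchedWeights

open QuenchedWeights in
/-- the explicit choice of y and λ in terms of x > 1 and t > 0 solves the
admissibility equations f•(x,y) = 1 − 1/x, f⋄(x,y) = y with Z = t/(t+2x−2). -/
theorem stmt13 (t x y l Z : ℝ) (ht : 0 < t) (hx : 1 < x)
    (hy : y = Real.sqrt (x - 1) * Real.sqrt (t + x - 1) / Real.sqrt x)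
    (hl : l = Real.sqrt (x - 1) * Real.sqrt x * Real.sqrt (t + x - 1) /
      (2 * (t - 2) * x - t + 3 * x ^ 2 + 1))
    (hZ : Z = t / (t + 2 * x - 2)) :
    Z = Real.sqrt (1 - 4 * l ^ 2 * x / (1 - l * y) ^ 2) ∧
    t * (1 - Z) / (2 * x * Z) = 1 - 1 / x ∧
    t * l / ((1 - l * y) * Z) = y := by
  have hs : 0 < t + 2 * x - 2 := by linarith
  obtain rfl : y = yStar t x := hy
  obtain rfl : l = lamStar t x := hl
  subst hZ
  refine ⟨?_, t_mul_one_sub_div_eq ht.ne' (by linarith) hs.ne', ?_⟩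
  · rw [one_sub_four_lamStar_sq_mul_div ht hx, Real.sqrt_sq (by positivity)]
  · rw [show ∀ a b c : ℝ, t * a / (b * c) = t / c * (a / b) by intros; ring,
      lamStar_div_one_sub_lamStar_mul_yStar ht hx]
    field_simp
end

section
/- For the Bouttier–Di Francesco–Guitter generating functions, the binomial sums simplify: Σ_{k,k'≥0} C(2k+k'+1, k+1)·C(k+k', k)·q_{2+2k+k'}·x^k·y^{k'} with q_n = t·λ^n equals t(1−Z)/(2xZ), and Σ_{k,k'≥0} C(2k+k', k)·C(k+k', k)·q_{1+2k+k'}·x^k·y^{k'} equals tλ/((1−λy)Z), where Z = sqrt(1 − 4λ²x/(1−λy)²), valid for x, y, λ > 0 with λy < 1 and 4λ²x < (1−λy)². -/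
/-!
Both sums have the shape `∑ C(2k+r+k', k+r) C(k+k', k) l^(r+1+2k+k') x^k y^k'`, with `r = 1` and
`r = 0`. Both binomial products count the same trinomial coefficient, so the summand factors as
`C(2k+r, k) l^(2k+r+1) x^k · C(k'+2k+r, 2k+r) (ly)^k'`, and the negative binomial series in `k'`
leaves `(l/(1-ly))^(r+1) ∑ₖ C(2k+r, k) u^k` with `u = l²x/(1-ly)²`. For `r = 0` this is the
binomial series of `(1-4u)^(-1/2)`; the case `r = 1` is its shift by one, as
`C(2k+2, k+1) = 2 C(2k+1, k)`.
-/

open Polynomial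

lemma Nat.centralBinom_succ_eq_two_mul_choose (n : ℕ) :
    (n + 1).centralBinom = 2 * (2 * n + 1).choose n := by
  rw [Nat.centralBinom_eq_two_mul_choose, show 2 * (n + 1) = 2 * n + 1 + 1 by ring,
    Nat.choose_succ_succ', Nat.choose_symm_half]
  ring

lemma Nat.choose_mul_choose_trinomial (a b c : ℕ) :
    (a + b + c).choose a * (b + c).choose b = (a + b + c).choose (a + b) * (a + b).choose b := by
  have h := Nat.choose_mul (n := a + b + c) (k := a + b) (s := a) (by omega)
  rw [show a + b + c - a = b + c by omega, Nat.add_sub_cancel_left, Nat.choose_symm_add (a := a)] at h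
  exact h.symm

lemma ascPochhammer_eval_one_half {K : Type*} [Field K] [CharZero K] (n : ℕ) :
    (ascPochhammer K n).eval (1 / 2) = n.factorial * n.centralBinom / 4 ^ n := by
  induction n with
  | zero => simp
  | succ n ih =>
    have h := Nat.succ_mul_centralBinom_succ n
    rw [ascPochhammer_succ_eval, ih, Nat.factorial_succ,
      show ((n + 1).centralBinom : K) = 2 * (2 * n + 1) * n.centralBinom / (n + 1) by
        rw [eq_div_iff (Nat.cast_add_one_ne_zero n)]
        exact_mod_cast (mul_comm _ _).trans h]
    push_cast
    field_simp
    ring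

lemma Ring.multichoose_one_half {K : Type*} [Field K] [CharZero K] (n : ℕ) :
    Ring.multichoose (1 / 2 : K) n = n.centralBinom / 4 ^ n := by
  have h := Ring.factorial_nsmul_multichoose_eq_ascPochhammer (1 / 2 : K) n
  rw [ascPochhammer_smeval_eq_eval, ascPochhammer_eval_one_half, nsmul_eq_mul,
    mul_div_assoc] at h
  exact mul_left_cancel₀ (Nat.cast_ne_zero.mpr n.factorial_ne_zero) h

theorem Real.hasSum_centralBinom_mul_pow {u : ℝ} (hu : 4 * |u| < 1) :
    HasSum (fun n ↦ n.centralBinom * u ^ n) (1 / √(1 - 4 * u)) := by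
  have h := (Real.one_div_one_sub_rpow_hasFPowerSeriesOnBall_zero (1 / 2)).hasSum
    (y := 4 * u) (by
      rw [Metric.mem_eball, edist_zero_right, enorm_mul, ← ofReal_norm, ← ofReal_norm,
        ← ENNReal.ofReal_mul (norm_nonneg _), ENNReal.ofReal_lt_one]
      simpa using hu)
  rw [FormalMultilinearSeries.ofScalars_apply_eq'] at h
  simp only [zero_add, ← Real.sqrt_eq_rpow] at h
  refine h.congr_fun fun n ↦ ?_
  rw [← Ring.multichoose_eq, Ring.multichoose_one_half, smul_eq_mul, mul_pow]
  field_simp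

theorem Real.hasSum_choose_two_mul_add_one_mul_pow {u : ℝ} (hu0 : u ≠ 0) (hu : 4 * |u| < 1) :
    HasSum (fun n ↦ ((2 * n + 1).choose n : ℝ) * u ^ n) ((1 / √(1 - 4 * u) - 1) / (2 * u)) := by
  have h := ((hasSum_nat_add_iff' 1).mpr (Real.hasSum_centralBinom_mul_pow hu)).div_const (2 * u)
  simp only [Finset.range_one, Finset.sum_singleton, Nat.centralBinom_zero, Nat.cast_one,
    pow_zero, mul_one] at h
  refine h.congr_fun fun n ↦ ?_
  rw [Nat.centralBinom_succ_eq_two_mul_choose, pow_succ]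
  push_cast
  field_simp

theorem hasSum_prod_of_nonneg {α β : Type*} {f : α × β → ℝ} {g : α → ℝ} {s : ℝ} (hf : 0 ≤ f)
    (hrow : ∀ a, HasSum (fun b ↦ f (a, b)) (g a)) (hg : HasSum g s) : HasSum f s := by
  have hsum : Summable f := (summable_prod_of_nonneg hf).mpr
    ⟨fun a ↦ (hrow a).summable, by simpa only [fun a ↦ (hrow a).tsum_eq] using hg.summable⟩
  exact (hsum.hasSum.prod_fiberwise hrow).unique hg ▸ hsum.hasSum

theorem hasSum_choose_mul_choose_mul_pow (r : ℕ) {l x y s : ℝ} (hl : 0 ≤ l) (hx : 0 ≤ x)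
    (hy : 0 ≤ y) (hly : l * y < 1)
    (hs : HasSum (fun k ↦ ((2 * k + r).choose k : ℝ) * (l ^ 2 * x / (1 - l * y) ^ 2) ^ k) s) :
    HasSum (fun kk : ℕ × ℕ ↦ ((2 * kk.1 + r + kk.2).choose (kk.1 + r) : ℝ) *
        ((kk.1 + kk.2).choose kk.1 : ℝ) * l ^ (r + 1 + 2 * kk.1 + kk.2) * x ^ kk.1 * y ^ kk.2)
      ((l / (1 - l * y)) ^ (r + 1) * s) := by
  refine hasSum_prod_of_nonneg (fun kk ↦ by positivity) (fun k ↦ ?_) (hs.mul_left _)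
  have hgeom := (hasSum_choose_mul_geometric_of_norm_lt_one (2 * k + r) (r := l * y)
    (by rwa [Real.norm_of_nonneg (by positivity)])).mul_left
      (((2 * k + r).choose k : ℝ) * l ^ (2 * k + r + 1) * x ^ k)
  have hrow : (l / (1 - l * y)) ^ (r + 1) *
      (((2 * k + r).choose k : ℝ) * (l ^ 2 * x / (1 - l * y) ^ 2) ^ k) =
      ((2 * k + r).choose k : ℝ) * l ^ (2 * k + r + 1) * x ^ k *
        (1 / (1 - l * y) ^ (2 * k + r + 1)) := by
    have : 1 - l * y ≠ 0 := (sub_pos.mpr hly).ne'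
    rw [div_pow, div_pow, mul_pow, ← pow_mul, ← pow_mul]
    field_simp
    ring
  refine hrow ▸ hgeom.congr_fun fun k' ↦ ?_
  rw [show 2 * k + r + k' = k + r + k + k' by ring, show k' + (2 * k + r) = k + r + k + k' by ring,
    show 2 * k + r = k + r + k by ring, ← Nat.cast_mul, Nat.choose_mul_choose_trinomial,
    Nat.cast_mul]
  ring

theorem stmt17_general (t x y l : ℝ) (hx : 0 < x) (hy : 0 < y) (hl : 0 < l)
    (hly : l * y < 1) (harg : 4 * l ^ 2 * x < (1 - l * y) ^ 2)
    (Z : ℝ) (hZ : Z = Real.sqrt (1 - 4 * l ^ 2 * x / (1 - l * y) ^ 2)) :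
    (∑' kk : ℕ × ℕ, ((2 * kk.1 + kk.2 + 1).choose (kk.1 + 1) : ℝ) *
        ((kk.1 + kk.2).choose kk.1 : ℝ) * (t * l ^ (2 + 2 * kk.1 + kk.2)) *
        x ^ kk.1 * y ^ kk.2
      = t * (1 - Z) / (2 * x * Z)) ∧
    (∑' kk : ℕ × ℕ, ((2 * kk.1 + kk.2).choose kk.1 : ℝ) *
        ((kk.1 + kk.2).choose kk.1 : ℝ) * (t * l ^ (1 + 2 * kk.1 + kk.2)) *
        x ^ kk.1 * y ^ kk.2
      = t * l / ((1 - l * y) * Z)) := by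
  have hw : 1 - l * y ≠ 0 := (sub_pos.mpr hly).ne'
  obtain ⟨u, hu_def⟩ : ∃ u, u = l ^ 2 * x / (1 - l * y) ^ 2 := ⟨_, rfl⟩
  have hu0 : 0 < u := hu_def ▸ by positivity
  have hu : 4 * |u| < 1 := by
    rw [abs_of_pos hu0, hu_def, ← mul_div_assoc, ← mul_assoc, div_lt_one (by positivity)]
    exact harg
  have hZu : Z = √(1 - 4 * u) := by rw [hZ, hu_def]; ring_nf
  have hZ0 : 0 < Z := hZu ▸ Real.sqrt_pos.mpr (by linarith [le_abs_self u])
  have hsum (r : ℕ) {s : ℝ} (hs : HasSum (fun k ↦ ((2 * k + r).choose k : ℝ) * u ^ k) s) :=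
    (hasSum_choose_mul_choose_mul_pow r hl.le hx.le hy.le hly (hu_def ▸ hs)).mul_left t
  have h0 := hZu ▸ Real.hasSum_centralBinom_mul_pow hu
  have h1 := hZu ▸ Real.hasSum_choose_two_mul_add_one_mul_pow hu0.ne' hu
  refine ⟨((hsum 1 h1).congr_fun fun kk ↦ ?_).tsum_eq.trans ?_,
    ((hsum 0 h0).congr_fun fun kk ↦ ?_).tsum_eq.trans ?_⟩
  · ring_nf
  · rw [hu_def, one_add_one_eq_two]
    field_simp
  · ring_nf
  · rw [zero_add, pow_one]
    field_simp

/-- closed forms of the Bouttier–Di Francesco–Guitter generating functions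
for the weights q_n = t·λ^n. -/
theorem stmt17 (t x y l : ℝ) (ht : 0 < t) (hx : 0 < x) (hy : 0 < y) (hl : 0 < l)
    (hly : l * y < 1) (harg : 4 * l ^ 2 * x < (1 - l * y) ^ 2)
    (Z : ℝ) (hZ : Z = Real.sqrt (1 - 4 * l ^ 2 * x / (1 - l * y) ^ 2)) :
    (∑' kk : ℕ × ℕ, ((2 * kk.1 + kk.2 + 1).choose (kk.1 + 1) : ℝ) *
        ((kk.1 + kk.2).choose kk.1 : ℝ) * (t * l ^ (2 + 2 * kk.1 + kk.2)) *
        x ^ kk.1 * y ^ kk.2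
      = t * (1 - Z) / (2 * x * Z)) ∧
    (∑' kk : ℕ × ℕ, ((2 * kk.1 + kk.2).choose kk.1 : ℝ) *
        ((kk.1 + kk.2).choose kk.1 : ℝ) * (t * l ^ (1 + 2 * kk.1 + kk.2)) *
        x ^ kk.1 * y ^ kk.2
      = t * l / ((1 - l * y) * Z)) :=
  stmt17_general t x y l hx hy hl hly harg Z hZ
end
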